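/- The Zak transform of the second Hermite function h₂(t) = 2^{−1/4}(−1 + 4πt²)e^{−πt²} vanishes at the origin: Zh₂(0,0) = Σ_{k∈ℤ} (−1 + 4πk²) e^{−πk²} = 0. -/

import Mathlib

/-!
Writing `θ₃(α) = ∑ₖ e^{-παk²}`, the sum in question is `-(θ₃(1) + 4 θ₃'(1))`. Poisson summation
gives Jacobi's identity `θ₃(α) = α^{-1/2} θ₃(1/α)` for `α > 0`, and differentiating it at `α = 1`
yields `θ₃'(1) = -θ₃(1)/2 - θ₃'(1)`, i.e. `θ₃(1) + 4 θ₃'(1) = 0`. The Zak transform of `h₂` at the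
origin is `2^{-1/4}` times the same sum.
-/

open MeasureTheory Complex
open scoped Real

/-- The Zak transform `Zf(x,ω) = Σ_{k∈ℤ} f(k-x) e^{2πiωk}`. -/
noncomputable def Zak (f : ℝ → ℂ) (x ω : ℝ) : ℂ :=
  ∑' k : ℤ, f ((k : ℝ) - x) * Complex.exp (2 * π * Complex.I * ω * (k : ℝ))

/-- The Wiener space `W₀(ℝ)` of continuous functions with summable sequence of local sup
norms (hence bounded). -/
def MemWienerSpace (f : ℝ → ℂ) : Prop :=
  Continuous f ∧ Summable (fun k : ℤ => ⨆ t : Set.Icc (k : ℝ) ((k : ℝ) + 1), ‖f t‖)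

/-- The second Hermite function `h₂(t) = 2^{-1/4}(-1 + 4πt²)e^{-πt²}`. -/
noncomputable def hermite2 (t : ℝ) : ℂ :=
  ((2 ^ (-(1 : ℝ) / 4) * (-1 + 4 * π * t ^ 2) * Real.exp (-(π * t ^ 2)) : ℝ) : ℂ)

open Real Filter Set

lemma summable_sq_mul_exp_neg_mul_int_sq {c : ℝ} (hc : 0 < c) :
    Summable fun n : ℤ => (n : ℝ) ^ 2 * rexp (-π * c * n ^ 2) := by
  convert summable_pow_mul_jacobiTheta₂_term_bound 0 hc 2 using 2 with n
  rw [Int.cast_abs, sq_abs]; ring_nf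

lemma summable_exp_neg_mul_int_sq {c : ℝ} (hc : 0 < c) :
    Summable fun n : ℤ => rexp (-π * c * n ^ 2) := by
  convert summable_pow_mul_jacobiTheta₂_term_bound 0 hc 0 using 2 with n
  ring_nf

noncomputable def theta3 (a : ℝ) : ℝ := ∑' n : ℤ, rexp (-π * a * n ^ 2)

lemma hasDerivAt_theta3 {a : ℝ} (ha : 0 < a) :
    HasDerivAt theta3 (∑' n : ℤ, -π * n ^ 2 * rexp (-π * a * n ^ 2)) a := by
  have hterm (n : ℤ) (y : ℝ) :
      HasDerivAt (fun y => rexp (-π * y * n ^ 2)) (-π * n ^ 2 * rexp (-π * y * n ^ 2)) y := by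
    simpa [mul_comm, mul_left_comm, mul_assoc] using
      ((hasDerivAt_id y).const_mul (-π) |>.mul_const ((n : ℝ) ^ 2)).exp
  refine hasDerivAt_tsum_of_isPreconnected
    ((summable_sq_mul_exp_neg_mul_int_sq (half_pos ha)).mul_left π) isOpen_Ioi
    isPreconnected_Ioi (fun n y _ => hterm n y) (fun n y hy => ?_) (half_lt_self ha)
    (summable_exp_neg_mul_int_sq ha) (half_lt_self ha)
  rw [norm_mul, norm_mul, norm_neg, norm_of_nonneg pi_pos.le, norm_of_nonneg (sq_nonneg _),
    norm_of_nonneg (exp_pos _).le, mul_assoc]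
  have hexp : rexp (-π * y * n ^ 2) ≤ rexp (-π * (a / 2) * n ^ 2) := exp_le_exp.2 <| by
    nlinarith [mul_nonneg (mul_nonneg pi_pos.le (sq_nonneg (n : ℝ))) (sub_nonneg.2 (le_of_lt hy))]
  gcongr

lemma theta3_eq_rpow_mul_theta3_inv {a : ℝ} (ha : 0 < a) :
    theta3 a = a ^ (-(1 / 2) : ℝ) * theta3 a⁻¹ := by
  rw [theta3, theta3, tsum_exp_neg_mul_int_sq ha, rpow_neg ha.le, one_div]
  simp only [div_eq_mul_inv]

lemma theta3_one_add_four_mul_deriv_one : theta3 1 + 4 * deriv theta3 1 = 0 := by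
  set θ' := deriv theta3 1
  have hθ : HasDerivAt theta3 θ' 1 := (hasDerivAt_theta3 one_pos).differentiableAt.hasDerivAt
  have hrhs : HasDerivAt (fun a : ℝ => a ^ (-(1 / 2) : ℝ) * theta3 a⁻¹)
      (-(1 / 2) * theta3 1 - θ') 1 := by
    have hinv : HasDerivAt theta3 θ' (1 : ℝ)⁻¹ := by rwa [inv_one]
    refine ((hasDerivAt_rpow_const (Or.inl one_ne_zero)).mul
      (hinv.comp (1 : ℝ) (hasDerivAt_inv one_ne_zero))).congr_deriv ?_
    simp [sub_eq_add_neg]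
  have heq : theta3 =ᶠ[nhds 1] fun a => a ^ (-(1 / 2) : ℝ) * theta3 a⁻¹ :=
    eventually_of_mem (Ioi_mem_nhds one_pos) fun a ha => theta3_eq_rpow_mul_theta3_inv ha
  have hderiv := hθ.unique (hrhs.congr_of_eventuallyEq heq)
  linarith

lemma tsum_neg_one_add_four_pi_mul_sq_mul_exp :
    ∑' k : ℤ, (-1 + 4 * π * (k : ℝ) ^ 2) * rexp (-(π * (k : ℝ) ^ 2)) = 0 := by
  have hsplit (k : ℤ) : (-1 + 4 * π * (k : ℝ) ^ 2) * rexp (-(π * (k : ℝ) ^ 2)) =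
      -(rexp (-π * 1 * k ^ 2) + 4 * (-π * k ^ 2 * rexp (-π * 1 * k ^ 2))) := by
    ring_nf
  have hsummable : Summable fun n : ℤ => -π * n ^ 2 * rexp (-π * 1 * n ^ 2) := by
    simpa only [mul_assoc] using (summable_sq_mul_exp_neg_mul_int_sq one_pos).mul_left (-π)
  rw [tsum_congr hsplit, tsum_neg,
    (summable_exp_neg_mul_int_sq one_pos).tsum_add (hsummable.mul_left 4),
    tsum_mul_left, ← theta3, ← (hasDerivAt_theta3 one_pos).deriv,
    theta3_one_add_four_mul_deriv_one, neg_zero]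

/-- The Zak transform of the second Hermite function vanishes at the origin:
`Zh₂(0,0) = Σ_{k∈ℤ} 2^{-1/4}(-1 + 4πk²) e^{-πk²} = 0`, in particular
`Σ_{k∈ℤ} (-1 + 4πk²) e^{-πk²} = 0`. -/
theorem zak_hermite2_zero_at_origin :
    Zak hermite2 0 0 = 0 ∧
      (∑' k : ℤ, (((-1 + 4 * π * (k : ℝ) ^ 2) * Real.exp (-(π * (k : ℝ) ^ 2)) : ℝ) : ℂ)) = 0 := by
  have hsum :
      (∑' k : ℤ, (((-1 + 4 * π * (k : ℝ) ^ 2) * rexp (-(π * (k : ℝ) ^ 2)) : ℝ) : ℂ)) = 0 := by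
    rw [← ofReal_tsum, tsum_neg_one_add_four_pi_mul_sq_mul_exp, ofReal_zero]
  have hterm (k : ℤ) : hermite2 ((k : ℝ) - 0) * cexp (2 * π * I * (0 : ℝ) * ((k : ℝ) : ℂ)) =
      ((2 ^ (-(1 : ℝ) / 4) : ℝ) : ℂ) *
        (((-1 + 4 * π * (k : ℝ) ^ 2) * rexp (-(π * (k : ℝ) ^ 2)) : ℝ) : ℂ) := by
    simp only [hermite2, sub_zero, ofReal_zero, mul_zero, zero_mul, Complex.exp_zero, mul_one,
      ofReal_mul, mul_assoc]
  exact ⟨by rw [Zak, tsum_congr hterm, tsum_mul_left, hsum, mul_zero], hsum⟩
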